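/- arXiv:1406.6741 — 5 statements merged into one kernel-verified Lean document; each statement's English description precedes it below -/
import Mathlib

section
/- Let c₁ and c₂ be circles in the Euclidean plane with centers O₁ ≠ O₂ and radii R₁, R₂ > 0, intersecting in two distinct points P ≠ Q (so dist(P,Oₘ) = dist(Q,Oₘ) = Rₘ for m = 1,2). If a circle with center X and radius ρ > 0 is orthogonal to both c₁ and c₂ (i.e. dist(X,O₁)² = R₁² + ρ² and dist(X,O₂)² = R₂² + ρ²), then X lies on the line through P and Q but does not lie in the closed segment [P,Q]. -/
open scoped RealInnerProductSpace
open Real EuclideanGeometry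

noncomputable section

/-- The Euclidean plane. -/
abbrev E2 := EuclideanSpace ℝ (Fin 2)

lemma radical_inner (O₁ O₂ y z : E2)
    (h : dist y O₁ ^ 2 - dist y O₂ ^ 2 = dist z O₁ ^ 2 - dist z O₂ ^ 2) :
    ⟪y - z, O₂ - O₁⟫ = 0 := by
  have e : ∀ a b : E2, dist a b ^ 2 = ‖a‖ ^ 2 - 2 * ⟪a, b⟫ + ‖b‖ ^ 2 := by
    intro a b
    rw [dist_eq_norm, norm_sub_sq_real]
  rw [e, e, e, e] at h
  rw [inner_sub_left, inner_sub_right, inner_sub_right]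
  linarith

/-- Let `c₁`, `c₂` be circles with distinct centers `O₁ ≠ O₂`, radii
`R₁, R₂ > 0`, meeting in two distinct points `P ≠ Q`.  If a circle of center `X` and
radius `ρ > 0` is orthogonal to both `c₁` and `c₂`, then `X` lies on the line through
`P` and `Q` but not in the closed segment `[P,Q]`. -/
theorem orthocircle_center_on_radical_axis
    (O₁ O₂ P Q X : E2) (R₁ R₂ ρ : ℝ)
    (hO : O₁ ≠ O₂) (hR₁ : 0 < R₁) (hR₂ : 0 < R₂) (hPQ : P ≠ Q)
    (hP₁ : dist P O₁ = R₁) (hQ₁ : dist Q O₁ = R₁)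
    (hP₂ : dist P O₂ = R₂) (hQ₂ : dist Q O₂ = R₂)
    (hρ : 0 < ρ)
    (h₁ : dist X O₁ ^ 2 = R₁ ^ 2 + ρ ^ 2)
    (h₂ : dist X O₂ ^ 2 = R₂ ^ 2 + ρ ^ 2) :
    X ∈ affineSpan ℝ ({P, Q} : Set E2) ∧ X ∉ segment ℝ P Q := by
  set v : E2 := O₂ - O₁ with hv
  have hv0 : v ≠ 0 := sub_ne_zero.mpr (Ne.symm hO)
  have hQP : ⟪Q - P, v⟫ = 0 := by
    apply radical_inner
    rw [hQ₁, hQ₂, hP₁, hP₂]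
  have hXP : ⟪X - P, v⟫ = 0 := by
    apply radical_inner
    rw [h₁, h₂, hP₁, hP₂]; ring
  -- dimension count
  have hfinE : Module.finrank ℝ E2 = 2 := by
    simp [finrank_euclideanSpace]
    -- fallback

  have hK : Module.finrank ℝ ((ℝ ∙ v)ᗮ : Submodule ℝ E2) = 1 := by
    have := Submodule.finrank_add_finrank_orthogonal (K := (ℝ ∙ v : Submodule ℝ E2))
    rw [finrank_span_singleton hv0, hfinE] at this
    omega
  have hQPmem : Q - P ∈ ((ℝ ∙ v)ᗮ : Submodule ℝ E2) := by
    rw [Submodule.mem_orthogonal_singleton_iff_inner_left]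
    exact hQP
  have hXPmem : X - P ∈ ((ℝ ∙ v)ᗮ : Submodule ℝ E2) := by
    rw [Submodule.mem_orthogonal_singleton_iff_inner_left]
    exact hXP
  have hQP0 : Q - P ≠ 0 := sub_ne_zero.mpr (Ne.symm hPQ)
  have hspan : (ℝ ∙ (Q - P) : Submodule ℝ E2) = (ℝ ∙ v)ᗮ := by
    apply Submodule.eq_of_le_of_finrank_eq
    · rwa [Submodule.span_singleton_le_iff_mem]
    · rw [finrank_span_singleton hQP0, hK]
  have hXP' : X - P ∈ (ℝ ∙ (Q - P) : Submodule ℝ E2) := hspan ▸ hXPmem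
  obtain ⟨t, ht⟩ := Submodule.mem_span_singleton.mp hXP'
  have hXeq : X = AffineMap.lineMap P Q t := by
    simp only [AffineMap.lineMap_apply]
    have : X = t • (Q - P) + P := by rw [ht]; abel
    simpa [vsub_eq_sub, vadd_eq_add] using this
  constructor
  · rw [hXeq]
    exact AffineMap.lineMap_mem_affineSpan_pair t P Q
  · intro hseg
    obtain ⟨a, b, ha, hb, hab, habX⟩ := hseg
    have hle : dist X O₁ ≤ R₁ := by
      calc dist X O₁ = ‖a • P + b • Q - O₁‖ := by rw [← habX, dist_eq_norm]
        _ = ‖a • (P - O₁) + b • (Q - O₁)‖ := by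
            congr 1
            have hb' : b = 1 - a := by linarith
            subst hb'
            module
        _ ≤ a * ‖P - O₁‖ + b * ‖Q - O₁‖ := by
            refine (norm_add_le _ _).trans ?_
            rw [norm_smul, norm_smul, Real.norm_eq_abs, Real.norm_eq_abs,
              abs_of_nonneg ha, abs_of_nonneg hb]
        _ = R₁ := by
            rw [← dist_eq_norm, ← dist_eq_norm, hP₁, hQ₁]
            nlinarith
    nlinarith [dist_nonneg (x := X) (y := O₁)]
end
end

section
/- Let p₁, p₂, p₃ be affinely independent points of the Euclidean plane and let r₁, r₂, r₃ ≥ 0 satisfy dist(p_u, p_v) ≥ r_u + r_v for all u ≠ v (so the three circles centered at p_u with radii r_u, some possibly degenerate to points, have pairwise disjoint interiors). Then there exist a unique point X and a unique real R > 0 such that dist(X, p_u)² = R² + r_u² for u = 1, 2, 3; that is, there is exactly one circle orthogonal to all three given circles. -/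
open scoped RealInnerProductSpace
open Real EuclideanGeometry

noncomputable section

/-- Key algebraic identity for powers of a point. -/
lemma key_dist_sq (Y p q : E2) :
    dist Y p ^ 2 - dist Y q ^ 2 = 2 * ⟪q - p, Y⟫ + ‖p‖ ^ 2 - ‖q‖ ^ 2 := by
  rw [dist_eq_norm, dist_eq_norm, @norm_sub_sq_real, @norm_sub_sq_real, inner_sub_left,
    real_inner_comm q Y, real_inner_comm p Y]
  ring

/-- A nondegenerate linear system of two inner-product equations in the plane has a
unique solution. -/
lemma aux_exists_unique_inner (v₁ v₂ : E2) (hli : LinearIndependent ℝ ![v₁, v₂]) (c₁ c₂ : ℝ) :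
    ∃! X : E2, ⟪v₁, X⟫ = c₁ ∧ ⟪v₂, X⟫ = c₂ := by
  set L : E2 →ₗ[ℝ] ℝ × ℝ :=
    LinearMap.prod ((innerSL ℝ v₁).toLinearMap) ((innerSL ℝ v₂).toLinearMap) with hL
  have hsp : Submodule.span ℝ ({v₁, v₂} : Set E2) = ⊤ := by
    have h1 : Set.range ![v₁, v₂] = {v₁, v₂} := by
      simp [Matrix.range_cons, Matrix.range_empty, Set.pair_comm]
    have := hli.span_eq_top_of_card_eq_finrank (by simp [finrank_euclideanSpace_fin])
    rwa [h1] at this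
  have hinj : Function.Injective L := by
    rw [← LinearMap.ker_eq_bot, Submodule.eq_bot_iff]
    intro x hx
    have hx1 : ⟪v₁, x⟫ = 0 := congrArg Prod.fst hx
    have hx2 : ⟪v₂, x⟫ = 0 := congrArg Prod.snd hx
    have hxmem : x ∈ Submodule.span ℝ ({v₁, v₂} : Set E2) := hsp ▸ Submodule.mem_top
    obtain ⟨a, b, hab⟩ := Submodule.mem_span_pair.mp hxmem
    have h0 : ⟪x, x⟫ = 0 := by
      calc ⟪x, x⟫ = ⟪a • v₁ + b • v₂, x⟫ := by rw [hab]
        _ = a * ⟪v₁, x⟫ + b * ⟪v₂, x⟫ := by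
            rw [inner_add_left, real_inner_smul_left, real_inner_smul_left]
        _ = 0 := by rw [hx1, hx2]; ring
    have := inner_self_eq_zero.mp h0
    simpa using this
  have hsurj : Function.Surjective L :=
    (LinearMap.injective_iff_surjective_of_finrank_eq_finrank
      (by simp [finrank_euclideanSpace_fin])).mp hinj
  obtain ⟨X, hX⟩ := hsurj (c₁, c₂)
  refine ⟨X, ⟨congrArg Prod.fst hX, congrArg Prod.snd hX⟩, ?_⟩
  intro Y hY
  apply hinj
  rw [hX]
  exact Prod.ext hY.1 hY.2

set_option maxHeartbeats 1000000 in
/-- Given three affinely independent points `p₁, p₂, p₃` in the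
Euclidean plane and radii `r₁, r₂, r₃ ≥ 0` whose circles have pairwise disjoint
interiors (`dist(p_u,p_v) ≥ r_u + r_v`), there is a unique pair `(X, R)` with `R > 0`
such that the circle of center `X` and radius `R` is orthogonal to all three given
(possibly degenerate) circles: `dist(X,p_u)² = R² + r_u²` for `u = 1,2,3`. -/
theorem exists_unique_orthogonal_circle
    (p₁ p₂ p₃ : E2) (r₁ r₂ r₃ : ℝ)
    (hind : AffineIndependent ℝ ![p₁, p₂, p₃])
    (hr₁ : 0 ≤ r₁) (hr₂ : 0 ≤ r₂) (hr₃ : 0 ≤ r₃)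
    (h12 : r₁ + r₂ ≤ dist p₁ p₂)
    (h23 : r₂ + r₃ ≤ dist p₂ p₃)
    (h31 : r₃ + r₁ ≤ dist p₃ p₁) :
    ∃! XR : E2 × ℝ, 0 < XR.2 ∧
      dist XR.1 p₁ ^ 2 = XR.2 ^ 2 + r₁ ^ 2 ∧
      dist XR.1 p₂ ^ 2 = XR.2 ^ 2 + r₂ ^ 2 ∧
      dist XR.1 p₃ ^ 2 = XR.2 ^ 2 + r₃ ^ 2 := by
  have hli : LinearIndependent ℝ ![p₂ - p₁, p₃ - p₁] := by
    rw [LinearIndependent.pair_iff]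
    intro s t hst
    have := affineIndependent_iff.mp hind Finset.univ ![-s - t, s, t] (by
      simp [Fin.sum_univ_three]; ring) (by
      simp only [Fin.sum_univ_three, Matrix.cons_val_zero, Matrix.cons_val_one, Matrix.head_cons,
        Matrix.cons_val_two, Matrix.tail_cons]
      linear_combination (norm := module) hst)
    exact ⟨by simpa using this 1 (by simp), by simpa using this 2 (by simp)⟩
  obtain ⟨X, ⟨hX1, hX2⟩, hXu⟩ := aux_exists_unique_inner (p₂ - p₁) (p₃ - p₁) hli
    ((r₁ ^ 2 - r₂ ^ 2 - ‖p₁‖ ^ 2 + ‖p₂‖ ^ 2) / 2) ((r₁ ^ 2 - r₃ ^ 2 - ‖p₁‖ ^ 2 + ‖p₃‖ ^ 2) / 2)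
  have e12 : dist X p₁ ^ 2 - r₁ ^ 2 = dist X p₂ ^ 2 - r₂ ^ 2 := by
    have := key_dist_sq X p₁ p₂; linarith
  have e13 : dist X p₁ ^ 2 - r₁ ^ 2 = dist X p₃ ^ 2 - r₃ ^ 2 := by
    have := key_dist_sq X p₁ p₃; linarith
  set d := dist X p₁ ^ 2 - r₁ ^ 2 with hd
  have hdpos : 0 < d := by
    by_contra hle
    push_neg at hle
    have hle1 : dist X p₁ ≤ r₁ := by nlinarith [dist_nonneg (x := X) (y := p₁)]
    have hle2 : dist X p₂ ≤ r₂ := by nlinarith [dist_nonneg (x := X) (y := p₂)]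
    have hle3 : dist X p₃ ≤ r₃ := by nlinarith [dist_nonneg (x := X) (y := p₃)]
    have t12 : dist p₁ X + dist X p₂ = dist p₁ p₂ := by
      have ht := dist_triangle p₁ X p₂
      have : dist p₁ X = dist X p₁ := dist_comm _ _
      linarith
    have t23 : dist p₂ X + dist X p₃ = dist p₂ p₃ := by
      have ht := dist_triangle p₂ X p₃
      have : dist p₂ X = dist X p₂ := dist_comm _ _
      linarith
    have t31 : dist p₃ X + dist X p₁ = dist p₃ p₁ := by
      have ht := dist_triangle p₃ X p₁
      have : dist p₃ X = dist X p₃ := dist_comm _ _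
      linarith
    have w12 : Wbtw ℝ p₁ X p₂ := dist_add_dist_eq_iff.mp t12
    have w23 : Wbtw ℝ p₂ X p₃ := dist_add_dist_eq_iff.mp t23
    have w31 : Wbtw ℝ p₃ X p₁ := dist_add_dist_eq_iff.mp t31
    obtain ⟨a, b, _, _, hab, habX⟩ := w12.mem_segment
    obtain ⟨a', b', _, _, hab', habX'⟩ := w31.mem_segment
    have h1 : X - p₁ = b • (p₂ - p₁) := by
      have ha : a = 1 - b := by linarith
      rw [← habX, ha]; module
    have h2 : X - p₁ = a' • (p₃ - p₁) := by
      have hb' : b' = 1 - a' := by linarith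
      rw [← habX', hb']; module
    have h3 : b • (p₂ - p₁) + (-a') • (p₃ - p₁) = 0 := by
      rw [neg_smul, ← h1, ← h2]; abel
    obtain ⟨hb0, ha0⟩ := LinearIndependent.pair_iff.mp hli b (-a') h3
    have hXp₁ : X = p₁ := by
      have := h1
      rw [hb0, zero_smul, sub_eq_zero] at this
      exact this
    rw [hXp₁] at w23
    obtain ⟨c, e, _, _, hce, hceX⟩ := w23.mem_segment
    have hc : c = 1 - e := by linarith
    rw [hc] at hceX
    have h4 : (1 - e) • (p₂ - p₁) + e • (p₃ - p₁) = 0 := by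
      linear_combination (norm := module) hceX
    obtain ⟨hc0, he0⟩ := LinearIndependent.pair_iff.mp hli (1 - e) e h4
    linarith
  set R := Real.sqrt d with hR
  have hRpos : 0 < R := Real.sqrt_pos.mpr hdpos
  have hR2 : R ^ 2 = d := Real.sq_sqrt hdpos.le
  refine ⟨(X, R), ⟨hRpos, by simp only; linarith, by simp only; linarith,
    by simp only; linarith⟩, ?_⟩
  rintro ⟨Y, S⟩ ⟨hS, hY1, hY2, hY3⟩
  simp only at hS hY1 hY2 hY3
  have hYin1 : ⟪p₂ - p₁, Y⟫ = (r₁ ^ 2 - r₂ ^ 2 - ‖p₁‖ ^ 2 + ‖p₂‖ ^ 2) / 2 := by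
    have := key_dist_sq Y p₁ p₂; linarith
  have hYin2 : ⟪p₃ - p₁, Y⟫ = (r₁ ^ 2 - r₃ ^ 2 - ‖p₁‖ ^ 2 + ‖p₃‖ ^ 2) / 2 := by
    have := key_dist_sq Y p₁ p₃; linarith
  have hYX : Y = X := hXu Y ⟨hYin1, hYin2⟩
  have hS2 : S ^ 2 = R ^ 2 := by
    rw [hYX] at hY1
    linarith
  have hSR : S = R := by
    calc S = Real.sqrt (S ^ 2) := (Real.sqrt_sq hS.le).symm
      _ = Real.sqrt (R ^ 2) := by rw [hS2]
      _ = R := Real.sqrt_sq hRpos.le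
  exact Prod.ext hYX hSR
end
end

section
/- Let i ≠ j be points of the Euclidean plane and r_i, r_j ≥ 0 with dist(i,j) ≥ r_i + r_j (the two vertex circles, possibly degenerate, have disjoint interiors). Let (O,R) and (O',R') with R, R' > 0 be two circles, each orthogonal to both vertex circles (dist(O,i)² = R² + r_i², dist(O,j)² = R² + r_j², dist(O',i)² = R'² + r_i², dist(O',j)² = R'² + r_j²), and assume (O,R) ≠ (O',R'). Then every point P lying on both circles (dist(P,O) = R and dist(P,O') = R') belongs to the closed segment [i,j]. -/
/-!
All three points `i`, `j`, `P` have equal powers with respect to the two circles (`ri ^ 2`,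
`rj ^ 2` and `0`), so they lie on the radical axis of the two circles, which is a line because
the centres differ (equal centres would force equal radii). Writing `P = i + t • (j - i)`,
Stewart's relation turns `dist P O = R` into `(1 - t) * ri ^ 2 + t * rj ^ 2 = t * (1 - t) * d ^ 2`
with `d = dist i j`, and `d ≥ ri + rj` rules out every root outside `[0, 1]`.
-/

open scoped RealInnerProductSpace
open Real EuclideanGeometry

noncomputable section

section InnerProductSpace

variable {V : Type*} [NormedAddCommGroup V] [InnerProductSpace ℝ V]

theorem inner_sub_sub_eq_zero_of_dist_sq_sub_eq {X Y O O' : V} {R R' : ℝ}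
    (hX : dist X O ^ 2 - R ^ 2 = dist X O' ^ 2 - R' ^ 2)
    (hY : dist Y O ^ 2 - R ^ 2 = dist Y O' ^ 2 - R' ^ 2) :
    ⟪O - O', X - Y⟫ = 0 := by
  simp only [dist_eq_norm, norm_sub_sq_real, inner_sub_left, inner_sub_right,
    real_inner_comm] at hX hY ⊢
  linarith

theorem dist_add_smul_sub_sq (i j O : V) (t : ℝ) :
    dist (i + t • (j - i)) O ^ 2 =
      (1 - t) * dist i O ^ 2 + t * dist j O ^ 2 - t * (1 - t) * dist i j ^ 2 := by
  have hj : j - O = (i - O) + (j - i) := by abel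
  have hP : i + t • (j - i) - O = (i - O) + t • (j - i) := by abel
  rw [dist_eq_norm, dist_eq_norm, dist_eq_norm, dist_comm, dist_eq_norm, hj, hP,
    norm_add_sq_real, norm_add_sq_real, inner_smul_right, norm_smul, mul_pow,
    Real.norm_eq_abs, sq_abs]
  ring

end InnerProductSpace

theorem nonneg_of_add_mul_sq_eq {ri rj d t : ℝ} (hri : 0 ≤ ri) (hrj : 0 ≤ rj)
    (hd : ri + rj ≤ d) (hd0 : 0 < d)
    (h : (1 - t) * ri ^ 2 + t * rj ^ 2 = t * (1 - t) * d ^ 2) : 0 ≤ t := by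
  by_contra! ht
  have : rj ^ 2 - ri ^ 2 ≤ d ^ 2 := by nlinarith
  nlinarith [mul_pos (mul_pos_of_neg_of_neg ht ht) (pow_pos hd0 2)]

theorem mem_Icc_of_add_mul_sq_eq {ri rj d t : ℝ} (hri : 0 ≤ ri) (hrj : 0 ≤ rj)
    (hd : ri + rj ≤ d) (hd0 : 0 < d)
    (h : (1 - t) * ri ^ 2 + t * rj ^ 2 = t * (1 - t) * d ^ 2) : t ∈ Set.Icc 0 1 := by
  refine ⟨nonneg_of_add_mul_sq_eq hri hrj hd hd0 h, ?_⟩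
  have := nonneg_of_add_mul_sq_eq (t := 1 - t) hrj hri (by linarith) hd0
    (by linear_combination h)
  linarith

/-- Let `i ≠ j` carry (possibly degenerate) vertex circles of radii
`ri, rj ≥ 0` with disjoint interiors (`dist(i,j) ≥ ri + rj`).  If `(O,R)` and `(O',R')`
are two distinct circles, each orthogonal to both vertex circles, then every common
point `P` of the two circles lies in the closed segment `[i,j]`. -/
theorem intersection_of_adjacent_face_circles_on_edge
    (i j O O' P : E2) (ri rj R R' : ℝ)
    (hij : i ≠ j) (hri : 0 ≤ ri) (hrj : 0 ≤ rj)
    (hdisj : ri + rj ≤ dist i j)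
    (hR : 0 < R) (hR' : 0 < R')
    (hOi : dist O i ^ 2 = R ^ 2 + ri ^ 2)
    (hOj : dist O j ^ 2 = R ^ 2 + rj ^ 2)
    (hO'i : dist O' i ^ 2 = R' ^ 2 + ri ^ 2)
    (hO'j : dist O' j ^ 2 = R' ^ 2 + rj ^ 2)
    (hne : (O, R) ≠ (O', R'))
    (hP : dist P O = R) (hP' : dist P O' = R') :
    P ∈ segment ℝ i j := by
  have : Fact (Module.finrank ℝ E2 = 2) := ⟨finrank_euclideanSpace_fin⟩
  have hOO' : O - O' ≠ 0 := by
    rintro hO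
    obtain rfl := sub_eq_zero.1 hO
    have hRR' : R = R' := (pow_left_inj₀ hR.le hR'.le two_ne_zero).1 (by linarith)
    exact hne (by rw [hRR'])
  have hi : dist i O ^ 2 - R ^ 2 = dist i O' ^ 2 - R' ^ 2 := by
    rw [dist_comm i, dist_comm i]; linarith
  have hj : dist j O ^ 2 - R ^ 2 = dist j O' ^ 2 - R' ^ 2 := by
    rw [dist_comm j, dist_comm j]; linarith
  have hP0 : dist P O ^ 2 - R ^ 2 = dist P O' ^ 2 - R' ^ 2 := by rw [hP, hP']; ring
  obtain ⟨t, ht⟩ := Submodule.mem_span_singleton.1 <|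
    Submodule.mem_span_singleton_of_inner_eq_zero_of_inner_eq_zero hOO'
      (sub_ne_zero.2 hij.symm) (inner_sub_sub_eq_zero_of_dist_sq_sub_eq hP0 hi)
      (inner_sub_sub_eq_zero_of_dist_sq_sub_eq hj hi)
  have hPt : i + t • (j - i) = P := by rw [ht]; abel
  have hPO := dist_add_smul_sub_sq i j O t
  rw [hPt, hP, dist_comm i, dist_comm j, hOi, hOj] at hPO
  rw [segment_eq_image']
  exact ⟨t, mem_Icc_of_add_mul_sq_eq hri hrj hdisj (dist_pos.2 hij) (by linarith), hPt⟩
end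
end

section
/- Let i ≠ j be points of the Euclidean plane and r_i, r_j ≥ 0 with dist(i,j) ≥ r_i + r_j. Let (O,R) and (O',R') with R, R' > 0 be two circles, each orthogonal to both circles (i,r_i) and (j,r_j), with (O,R) ≠ (O',R'). If the two circles intersect in exactly one point P (i.e. P is the unique point with dist(P,O) = R and dist(P,O') = R'), then P lies in the closed segment [i,j] and the line through i and j is the common tangent line of the two circles at P: ⟪O − P, j − i⟫ = 0 and ⟪O' − P, j − i⟫ = 0. -/
open scoped RealInnerProductSpace
open Real EuclideanGeometry

noncomputable section

lemma dist_sq_expand (x y : E2) :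
    dist x y ^ 2 = ⟪x, x⟫ - 2 * ⟪x, y⟫ + ⟪y, y⟫ := by
  rw [dist_eq_norm, ← real_inner_self_eq_norm_sq, inner_sub_left, inner_sub_right,
    inner_sub_right, real_inner_comm y x]
  ring

lemma inner_eq_zero_of_powers (a b c d : E2)
    (h : dist a c ^ 2 - dist a d ^ 2 = dist b c ^ 2 - dist b d ^ 2) :
    ⟪a - b, c - d⟫ = 0 := by
  simp only [dist_sq_expand] at h
  simp only [inner_sub_left, inner_sub_right]
  linarith

/-- Let `i ≠ j` carry (possibly degenerate) vertex circles of radii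
`ri, rj ≥ 0` with disjoint interiors.  Let `(O,R) ≠ (O',R')` be two circles, each
orthogonal to both vertex circles.  If the two circles meet in exactly one point `P`,
then `P ∈ [i,j]` and the line through `i` and `j` is tangent to both circles at `P`:
`⟪O − P, j − i⟫ = 0` and `⟪O' − P, j − i⟫ = 0`. -/
theorem tangent_face_circles_touch_on_edge
    (i j O O' P : E2) (ri rj R R' : ℝ)
    (hij : i ≠ j) (hri : 0 ≤ ri) (hrj : 0 ≤ rj)
    (hdisj : ri + rj ≤ dist i j)
    (hR : 0 < R) (hR' : 0 < R')
    (hOi : dist O i ^ 2 = R ^ 2 + ri ^ 2)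
    (hOj : dist O j ^ 2 = R ^ 2 + rj ^ 2)
    (hO'i : dist O' i ^ 2 = R' ^ 2 + ri ^ 2)
    (hO'j : dist O' j ^ 2 = R' ^ 2 + rj ^ 2)
    (hne : (O, R) ≠ (O', R'))
    (hP : dist P O = R) (hP' : dist P O' = R')
    (huniq : ∀ Y : E2, dist Y O = R → dist Y O' = R' → Y = P) :
    P ∈ segment ℝ i j ∧ ⟪O - P, j - i⟫ = 0 ∧ ⟪O' - P, j - i⟫ = 0 := by
  -- O ≠ O'
  have hOO' : O ≠ O' := by
    intro h
    subst h
    have hRR : (R - R') * (R + R') = 0 := by nlinarith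
    rcases mul_eq_zero.mp hRR with h1 | h1
    · exact hne (by rw [show R = R' by linarith])
    · linarith
  -- i, j, P all on the radical axis
  have h1 : ⟪i - j, O - O'⟫ = 0 := by
    apply inner_eq_zero_of_powers
    rw [dist_comm i O, dist_comm i O', dist_comm j O, dist_comm j O']
    rw [hOi, hOj, hO'i, hO'j]; ring
  have h2 : ⟪i - P, O - O'⟫ = 0 := by
    apply inner_eq_zero_of_powers
    rw [dist_comm i O, dist_comm i O', hOi, hO'i, hP, hP']; ring
  have h3 : ⟪j - P, O - O'⟫ = 0 := by
    apply inner_eq_zero_of_powers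
    rw [dist_comm j O, dist_comm j O', hOj, hO'j, hP, hP']; ring
  -- P lies on the line through O and O' (reflection argument)
  set s : AffineSubspace ℝ E2 := line[ℝ, O, O'] with hs
  haveI : Nonempty s := ⟨⟨O, left_mem_affineSpan_pair ℝ O O'⟩⟩
  have hPs : P ∈ s := by
    have hO : O ∈ s := left_mem_affineSpan_pair ℝ O O'
    have hO' : O' ∈ s := right_mem_affineSpan_pair ℝ O O'
    have h4 : reflection s P = P := by
      apply huniq
      · rw [dist_comm, dist_reflection_eq_of_mem s hO, dist_comm, hP]
      · rw [dist_comm, dist_reflection_eq_of_mem s hO', dist_comm, hP']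
    exact (EuclideanGeometry.reflection_eq_self_iff P).mp h4
  rw [show P = (P -ᵥ O) +ᵥ O from (vsub_vadd P O).symm, hs,
    vadd_left_mem_affineSpan_pair] at hPs
  obtain ⟨t, ht⟩ := hPs
  have htP : P - O = t • (O' - O) := by
    rw [show t • (O' - O) = t • (O' -ᵥ O) from rfl, ht]; rfl
  -- tangency
  have hv : ⟪O' - O, j - i⟫ = 0 := by
    rw [← neg_sub O O', ← neg_sub i j, inner_neg_neg, real_inner_comm]
    exact h1
  have hOP : O - P = -(t • (O' - O)) := by rw [← htP]; abel
  have hO'P : O' - P = (1 - t) • (O' - O) := by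
    rw [sub_smul, one_smul, ← htP]; abel
  have t1 : ⟪O - P, j - i⟫ = 0 := by
    rw [hOP, inner_neg_left, real_inner_smul_left, hv, mul_zero, neg_zero]
  have t2 : ⟪O' - P, j - i⟫ = 0 := by
    rw [hO'P, real_inner_smul_left, hv, mul_zero]
  refine ⟨?_, t1, t2⟩
  -- distances dist i P = ri, dist P j = rj via Pythagoras
  have hiv : ⟪i - P, O' - O⟫ = 0 := by
    rw [← neg_sub O O', inner_neg_right, h2, neg_zero]
  have hjv : ⟪j - P, O' - O⟫ = 0 := by
    rw [← neg_sub O O', inner_neg_right, h3, neg_zero]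
  have hiPO : ⟪i - P, P - O⟫ = 0 := by
    rw [htP, real_inner_smul_right, hiv, mul_zero]
  have hjPO : ⟪j - P, P - O⟫ = 0 := by
    rw [htP, real_inner_smul_right, hjv, mul_zero]
  have pyth : ∀ x : E2, ⟪x - P, P - O⟫ = 0 →
      dist x O ^ 2 = dist x P ^ 2 + dist P O ^ 2 := by
    intro x hx
    rw [dist_eq_norm, dist_eq_norm, dist_eq_norm,
      show x - O = (x - P) + (P - O) by abel, norm_add_sq_real, hx]
    ring
  have hiP2 : dist i P ^ 2 = ri ^ 2 := by
    have := pyth i hiPO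
    rw [dist_comm i O, hOi, hP] at this; linarith
  have hjP2 : dist j P ^ 2 = rj ^ 2 := by
    have := pyth j hjPO
    rw [dist_comm j O, hOj, hP] at this; linarith
  have hiP : dist i P = ri := by
    rw [← Real.sqrt_sq dist_nonneg, hiP2, Real.sqrt_sq hri]
  have hjP : dist P j = rj := by
    rw [dist_comm, ← Real.sqrt_sq dist_nonneg, hjP2, Real.sqrt_sq hrj]
  have hsum : dist i P + dist P j = dist i j := by
    have := dist_triangle i P j
    rw [hiP, hjP] at *
    linarith
  rw [mem_segment_iff_wbtw, ← dist_add_dist_eq_iff]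
  exact hsum
end
end

section
/- Let l_ij, l_jk, l_ki > 0 satisfy the strict triangle inequalities l_ij < l_jk + l_ki, l_jk < l_ki + l_ij, l_ki < l_ij + l_jk, and let r_i, r_j, r_k ≥ 0 satisfy l_ij ≥ r_i + r_j, l_jk ≥ r_j + r_k, l_ki ≥ r_k + r_i. Then there exist points i, j, k in the Euclidean plane with dist(i,j) = l_ij, dist(j,k) = l_jk, dist(k,i) = l_ki, together with a point O and a real R > 0 such that dist(O,i)² = R² + r_i², dist(O,j)² = R² + r_j², and dist(O,k)² = R² + r_k². (That is, the edge-length and radius data is realized by a Euclidean decorated triangle: a triangle with the prescribed side lengths carrying vertex circles of the prescribed radii together with a face circle orthogonal to all three vertex circles.) -/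
open scoped RealInnerProductSpace
open Real EuclideanGeometry

noncomputable section

/-- A point of the plane from coordinates. -/
def pt (a b : ℝ) : E2 := (WithLp.equiv 2 (Fin 2 → ℝ)).symm ![a, b]

lemma pt_distsq (a b c d : ℝ) : dist (pt a b) (pt c d) ^ 2 = (a - c) ^ 2 + (b - d) ^ 2 := by
  rw [EuclideanSpace.dist_eq]
  rw [Real.sq_sqrt (by positivity)]
  simp [pt, Fin.sum_univ_two, Real.dist_eq, sq_abs]

lemma le_of_sq_le_sq' {d r : ℝ} (hd : 0 ≤ d) (hr : 0 ≤ r) (h : d^2 ≤ r^2) : d ≤ r := by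
  nlinarith

lemma pt_dist (a b c d : ℝ) : dist (pt a b) (pt c d) = Real.sqrt ((a - c) ^ 2 + (b - d) ^ 2) := by
  have h := pt_distsq a b c d
  nlinarith [dist_nonneg (x := pt a b) (y := pt c d),
    Real.sq_sqrt (show (0:ℝ) ≤ (a-c)^2+(b-d)^2 by positivity),
    Real.sqrt_nonneg ((a-c)^2+(b-d)^2)]

/-- Edge lengths `l_ij, l_jk, l_ki > 0` satisfying the strict triangle
inequalities, together with radii `r_i, r_j, r_k ≥ 0` satisfying the disjointness
conditions `l_uv ≥ r_u + r_v`, are realized by a Euclidean decorated triangle: there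
are points `i, j, k` at the prescribed mutual distances and a circle `(O,R)`, `R > 0`,
orthogonal to the three (possibly degenerate) vertex circles. -/
theorem decorated_triangle_from_lengths_and_radii
    (lij ljk lki ri rj rk : ℝ)
    (hlij : 0 < lij) (hljk : 0 < ljk) (hlki : 0 < lki)
    (htri₁ : lij < ljk + lki) (htri₂ : ljk < lki + lij) (htri₃ : lki < lij + ljk)
    (hri : 0 ≤ ri) (hrj : 0 ≤ rj) (hrk : 0 ≤ rk)
    (hij : ri + rj ≤ lij) (hjk : rj + rk ≤ ljk) (hki : rk + ri ≤ lki) :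
    ∃ (i j k O : E2) (R : ℝ), 0 < R ∧
      dist i j = lij ∧ dist j k = ljk ∧ dist k i = lki ∧
      dist O i ^ 2 = R ^ 2 + ri ^ 2 ∧
      dist O j ^ 2 = R ^ 2 + rj ^ 2 ∧
      dist O k ^ 2 = R ^ 2 + rk ^ 2 := by
  obtain ⟨x, hx⟩ : ∃ x : ℝ, 2*lij*x = lij^2 + lki^2 - ljk^2 :=
    ⟨(lij^2 + lki^2 - ljk^2) / (2*lij), by field_simp⟩
  have hysq : 0 < lki^2 - x^2 := by
    have key : (2*lij*x)^2 = (lij^2 + lki^2 - ljk^2)^2 := by rw [hx]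
    nlinarith [mul_pos (mul_pos (mul_pos (show (0:ℝ) < lki+lij+ljk by linarith)
      (show (0:ℝ) < lki+lij-ljk by linarith)) (show (0:ℝ) < ljk+lki-lij by linarith))
      (show (0:ℝ) < ljk-lki+lij by linarith), sq_nonneg lij, mul_pos hlij hlij]
  obtain ⟨y, hy, hy2⟩ : ∃ y : ℝ, 0 < y ∧ y^2 = lki^2 - x^2 :=
    ⟨Real.sqrt (lki^2 - x^2), Real.sqrt_pos.mpr hysq, Real.sq_sqrt hysq.le⟩
  obtain ⟨u, hu⟩ : ∃ u : ℝ, 2*lij*u = lij^2 + ri^2 - rj^2 :=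
    ⟨(lij^2 + ri^2 - rj^2) / (2*lij), by field_simp⟩
  obtain ⟨v, hv⟩ : ∃ v : ℝ, 2*y*v = lki^2 + ri^2 - rk^2 - 2*u*x :=
    ⟨(lki^2 + ri^2 - rk^2 - 2*u*x) / (2*y), by field_simp⟩
  obtain ⟨p, hpeq⟩ : ∃ p : ℝ, p = u^2 + v^2 - ri^2 := ⟨_, rfl⟩
  have dij : dist (pt 0 0) (pt lij 0) = lij := by
    rw [pt_dist, show (0-lij)^2 + ((0:ℝ)-0)^2 = lij^2 by ring, Real.sqrt_sq hlij.le]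
  have djk : dist (pt lij 0) (pt x y) = ljk := by
    rw [pt_dist, show (lij-x)^2 + ((0:ℝ)-y)^2 = ljk^2 by linear_combination hy2 - hx,
      Real.sqrt_sq hljk.le]
  have dki : dist (pt x y) (pt 0 0) = lki := by
    rw [pt_dist, show (x-0)^2 + (y-(0:ℝ))^2 = lki^2 by linear_combination hy2,
      Real.sqrt_sq hlki.le]
  have dOi2 : dist (pt u v) (pt 0 0) ^ 2 = p + ri^2 := by
    rw [pt_distsq]; linear_combination -hpeq
  have dOj2 : dist (pt u v) (pt lij 0) ^ 2 = p + rj^2 := by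
    rw [pt_distsq]; linear_combination -hpeq - hu
  have dOk2 : dist (pt u v) (pt x y) ^ 2 = p + rk^2 := by
    rw [pt_distsq]; linear_combination -hpeq - hv + hy2
  have hp : 0 < p := by
    by_contra hple
    push_neg at hple
    have hOi : dist (pt u v) (pt 0 0) ≤ ri :=
      le_of_sq_le_sq' dist_nonneg hri (by rw [dOi2]; linarith)
    have hOj : dist (pt u v) (pt lij 0) ≤ rj :=
      le_of_sq_le_sq' dist_nonneg hrj (by rw [dOj2]; linarith)
    have hOk : dist (pt u v) (pt x y) ≤ rk :=
      le_of_sq_le_sq' dist_nonneg hrk (by rw [dOk2]; linarith)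
    have e1 : dist (pt 0 0) (pt u v) + dist (pt u v) (pt lij 0) = dist (pt 0 0) (pt lij 0) := by
      have t := dist_triangle (pt 0 0) (pt u v) (pt lij 0)
      have h1 : dist (pt 0 0) (pt u v) = dist (pt u v) (pt 0 0) := dist_comm _ _
      linarith [dij]
    have e2 : dist (pt lij 0) (pt u v) + dist (pt u v) (pt x y) = dist (pt lij 0) (pt x y) := by
      have t := dist_triangle (pt lij 0) (pt u v) (pt x y)
      have h1 : dist (pt lij 0) (pt u v) = dist (pt u v) (pt lij 0) := dist_comm _ _
      linarith [djk]
    have e3 : dist (pt x y) (pt u v) + dist (pt u v) (pt 0 0) = dist (pt x y) (pt 0 0) := by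
      have t := dist_triangle (pt x y) (pt u v) (pt 0 0)
      have h1 : dist (pt x y) (pt u v) = dist (pt u v) (pt x y) := dist_comm _ _
      linarith [dki]
    have w1 : Wbtw ℝ (pt 0 0) (pt u v) (pt lij 0) := dist_add_dist_eq_iff.mp e1
    have w2 : Wbtw ℝ (pt lij 0) (pt u v) (pt x y) := dist_add_dist_eq_iff.mp e2
    have w3 : Wbtw ℝ (pt x y) (pt u v) (pt 0 0) := dist_add_dist_eq_iff.mp e3
    by_cases hOj' : pt u v = pt lij 0
    · rw [hOj'] at w3
      have := dist_add_dist_eq_iff.mpr w3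
      rw [dki, dist_comm (pt x y) (pt lij 0), djk, dist_comm (pt lij 0) (pt 0 0), dij] at this
      linarith
    · have hcol1 : Collinear ℝ ({pt 0 0, pt u v, pt lij 0} : Set E2) := w1.collinear
      have hcol2 : Collinear ℝ ({pt lij 0, pt u v, pt x y} : Set E2) := w2.collinear
      have hi_mem : pt 0 0 ∈ line[ℝ, pt u v, pt lij 0] :=
        hcol1.mem_affineSpan_of_mem_of_ne (by simp) (by simp) (by simp) hOj'
      have hk_mem : pt x y ∈ line[ℝ, pt u v, pt lij 0] :=
        hcol2.mem_affineSpan_of_mem_of_ne (by simp) (by simp) (by simp) hOj'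
      have hc : Collinear ℝ ({pt 0 0, pt x y, pt u v, pt lij 0} : Set E2) :=
        collinear_insert_insert_of_mem_affineSpan_pair hi_mem hk_mem
      have hc' : Collinear ℝ ({pt 0 0, pt lij 0, pt x y} : Set E2) := by
        refine hc.subset ?_
        intro z hz
        simp only [Set.mem_insert_iff, Set.mem_singleton_iff] at hz ⊢
        tauto
      rcases hc'.wbtw_or_wbtw_or_wbtw with w | w | w
      · have h' := w.dist_add_dist
        rw [dij, djk, dist_comm (pt 0 0) (pt x y), dki] at h'
        linarith
      · have h' := w.dist_add_dist
        rw [djk, dki, dist_comm (pt lij 0) (pt 0 0), dij] at h'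
        linarith
      · have h' := w.dist_add_dist
        rw [dki, dij, dist_comm (pt x y) (pt lij 0), djk] at h'
        linarith
  refine ⟨pt 0 0, pt lij 0, pt x y, pt u v, Real.sqrt p, Real.sqrt_pos.mpr hp,
    dij, djk, dki, ?_, ?_, ?_⟩ <;> rw [Real.sq_sqrt hp.le]
  · exact dOi2
  · exact dOj2
  · exact dOk2
end
end
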